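/- arXiv:math/0111135 — 3 statements merged into one kernel-verified Lean document; each statement's English description precedes it below -/
import Mathlib

section
/- Let m ≥ 1 and let S ⊆ ℝ^m be a set whose unit secants fill the whole unit sphere: for every v ∈ ℝ^m with ‖v‖ = 1 there exist a, b ∈ S with a ≠ b and (a − b)/‖a − b‖ = v. Then for every finite set U₀ ⊆ ℝ^m of cardinality at most m − 1 there exist a, b ∈ S with a ≠ b such that ⟨a − b, u⟩ = 0 for all u ∈ U₀. In particular, S admits no universal distinguishing set of fewer than m elements for the linear response β(x,u) = f(x)·u with image S. -/
/-!
A subspace spanned by fewer than `m` vectors of `ℝ^m` is proper, so its orthogonal complement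
contains a unit vector `v`. Since the unit secants fill the sphere, `v` is the direction of some
`a - b` with `a ≠ b` in `S`, and then `a - b` is orthogonal to every vector of the subspace.
-/

open Module Submodule

theorem Submodule.span_ne_top_of_card_lt_finrank {R M : Type*} [Ring R] [StrongRankCondition R]
    [AddCommGroup M] [Module R M] {s : Finset M} (hs : s.card < finrank R M) :
    span R (s : Set M) ≠ ⊤ := by
  intro h
  have hle := finrank_span_finset_le_card (R := R) s
  rw [Set.finrank, h, finrank_top] at hle
  omega

section

variable {E : Type*} [NormedAddCommGroup E] [InnerProductSpace ℝ E]

def unitSecants (S : Set E) : Set E :=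
  {v | ∃ a ∈ S, ∃ b ∈ S, a ≠ b ∧ ‖a - b‖⁻¹ • (a - b) = v}

theorem Submodule.exists_norm_eq_one_mem_orthogonal {K : Submodule ℝ E}
    [K.HasOrthogonalProjection] (hK : K ≠ ⊤) : ∃ v ∈ Kᗮ, ‖v‖ = 1 := by
  obtain ⟨w, hw, hw0⟩ := exists_mem_ne_zero_of_ne_bot (mt orthogonal_eq_bot_iff.mp hK)
  exact ⟨‖w‖⁻¹ • w, Kᗮ.smul_mem _ hw, norm_smul_inv_norm hw0⟩

theorem exists_ne_sub_mem_orthogonal_of_sphere_subset_unitSecants {S : Set E}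
    (hS : Metric.sphere 0 1 ⊆ unitSecants S) {K : Submodule ℝ E} [K.HasOrthogonalProjection]
    (hK : K ≠ ⊤) : ∃ a ∈ S, ∃ b ∈ S, a ≠ b ∧ a - b ∈ Kᗮ := by
  obtain ⟨v, hvK, hv⟩ := K.exists_norm_eq_one_mem_orthogonal hK
  obtain ⟨a, ha, b, hb, hab, hdir⟩ := hS (mem_sphere_zero_iff_norm.mpr hv)
  have hnorm : ‖a - b‖ ≠ 0 := norm_ne_zero_iff.mpr (sub_ne_zero.mpr hab)
  have hsub : a - b = ‖a - b‖ • v := by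
    rw [← hdir, smul_smul, mul_inv_cancel₀ hnorm, one_smul]
  exact ⟨a, ha, b, hb, hab, hsub ▸ Kᗮ.smul_mem _ hvK⟩

end

/-- If the unit secants of `S ⊆ ℝ^m` fill the whole unit sphere, then for every finite set
`U₀ ⊆ ℝ^m` of at most `m − 1` vectors there are two distinct points of `S` whose difference is
orthogonal to every element of `U₀`; hence no universal distinguishing set has fewer than `m`
elements. -/
theorem no_small_distinguishing_set_of_secants_fill_sphere
    (m : ℕ) (hm : 1 ≤ m) (S : Set (EuclideanSpace ℝ (Fin m)))
    (hsec : ∀ v : EuclideanSpace ℝ (Fin m), ‖v‖ = 1 →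
      ∃ a ∈ S, ∃ b ∈ S, a ≠ b ∧ ‖a - b‖⁻¹ • (a - b) = v) :
    ∀ U₀ : Finset (EuclideanSpace ℝ (Fin m)), U₀.card ≤ m - 1 →
      ∃ a ∈ S, ∃ b ∈ S, a ≠ b ∧ ∀ u ∈ U₀, @inner ℝ _ _ (a - b) u = (0 : ℝ) := by
  intro U₀ hcard
  have hspan : span ℝ (U₀ : Set (EuclideanSpace ℝ (Fin m))) ≠ ⊤ :=
    span_ne_top_of_card_lt_finrank (by rw [finrank_euclideanSpace_fin]; omega)
  have hS : Metric.sphere 0 1 ⊆ unitSecants S := fun v hv =>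
    hsec v (mem_sphere_zero_iff_norm.mp hv)
  obtain ⟨a, ha, b, hb, hab, horth⟩ :=
    exists_ne_sub_mem_orthogonal_of_sphere_subset_unitSecants hS hspan
  exact ⟨a, ha, b, hb, hab, fun u hu => inner_left_of_mem_orthogonal (subset_span hu) horth⟩
end

section
/- Fix a positive integer r and let ℛ_r = 𝒮^{r−1} × ℛ ⊆ ℂ^{r−1} × ℂ × ℝ ≅ ℝ^{2r+1}, where 𝒮 = {t·e^{it} : t ≥ 0} ⊆ ℂ and ℛ = {(e^{it}, e^{t}·sin(2t)) : t ≥ 0} ⊆ ℂ × ℝ. Then for every finite set U₀ ⊆ ℝ^{2r+1} of cardinality at most 2r there exist a, b ∈ ℛ_r with a ≠ b and ⟨a − b, u⟩ = 0 for all u ∈ U₀. Hence, for the linear analytic response β(x,u) = f(x)·u on X × ℝ^{2r+1} where f is any map with image ℛ_r, there is no universal distinguishing set of cardinality 2r, showing the bound 2r+1 experiments cannot be lowered. -/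
/-- The Euclidean inner product on `ℂ^n × ℂ × ℝ` under the identification with `ℝ^{2n+3}`
(each complex coordinate contributing its real and imaginary parts). -/
noncomputable def euclidDot {n : ℕ} (a b : (Fin n → ℂ) × ℂ × ℝ) : ℝ :=
  (∑ i, ((a.1 i) * (starRingEnd ℂ) (b.1 i)).re) + (a.2.1 * (starRingEnd ℂ) (b.2.1)).re +
    a.2.2 * b.2.2

open Complex Real

lemma spiral_secant (v : ℂ) :
    ∃ t s : ℝ, 0 ≤ t ∧ 0 ≤ s ∧
      (t : ℂ) * Complex.exp ((t : ℂ) * Complex.I) -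
        (s : ℂ) * Complex.exp ((s : ℂ) * Complex.I) = v := by
  rcases eq_or_ne v 0 with rfl | hv
  · exact ⟨0, 0, le_refl _, le_refl _, by ring⟩
  set V : ℝ := ‖v‖ with hVdef
  have hV0 : 0 < V := norm_pos_iff.mpr hv
  have hVC : (V : ℂ) ≠ 0 := by exact_mod_cast hV0.ne'
  obtain ⟨n, hn⟩ := exists_nat_ge ((V + 1 - v.arg) / (2 * π))
  set t₁ : ℝ := v.arg + 2 * π * n with ht₁def
  have ht₁ : V + 1 ≤ t₁ := by
    have h2π : (0:ℝ) < 2 * π := by positivity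
    have := (div_le_iff₀ h2π).mp hn
    simp only [ht₁def]; nlinarith
  set t₂ : ℝ := t₁ + π with ht₂def
  set g : ℝ → ℝ := fun t =>
    ‖(t:ℂ) * Complex.exp ((t:ℂ) * Complex.I) - v‖ - t -
      (1 - v * Complex.exp (-((t:ℂ) * Complex.I)) / (t:ℂ)).arg with hgdef
  -- basic facts for t ≥ V + 1
  have habs_exp : ∀ t : ℝ, ‖Complex.exp ((t:ℂ) * Complex.I)‖ = 1 := by
    intro t
    rw [Complex.norm_exp]
    simp
  have habs_exp' : ∀ t : ℝ, ‖Complex.exp (-((t:ℂ) * Complex.I))‖ = 1 := by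
    intro t
    rw [Complex.norm_exp]
    simp
  have hre : ∀ t : ℝ, V + 1 ≤ t → 0 < (1 - v * Complex.exp (-((t:ℂ) * Complex.I)) / (t:ℂ)).re := by
    intro t ht
    have ht0 : (0:ℝ) < t := by linarith
    have h1 : ‖v * Complex.exp (-((t:ℂ) * Complex.I)) / (t:ℂ)‖ = V / t := by
      rw [norm_div, norm_mul, habs_exp']
      simp [abs_of_pos ht0, hVdef]
    have h2 : (v * Complex.exp (-((t:ℂ) * Complex.I)) / (t:ℂ)).re ≤ V / t :=
      (Complex.re_le_norm _).trans h1.le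
    have h3 : V / t < 1 := by
      rw [div_lt_one ht0]; linarith
    simp only [Complex.sub_re, Complex.one_re]
    linarith
  -- continuity
  have hgcont : ContinuousOn g (Set.Icc t₁ t₂) := by
    intro t ht
    have ht' : V + 1 ≤ t := le_trans ht₁ ht.1
    have ht0 : (0:ℝ) < t := by linarith
    apply ContinuousAt.continuousWithinAt
    have hinner : ContinuousAt (fun t : ℝ => 1 - v * Complex.exp (-((t:ℂ) * Complex.I)) / (t:ℂ)) t := by
      apply ContinuousAt.sub continuousAt_const
      apply ContinuousAt.div
      · exact (continuousAt_const.mul ((Complex.continuous_exp.comp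
          ((Complex.continuous_ofReal.mul continuous_const).neg)).continuousAt))
      · exact Complex.continuous_ofReal.continuousAt
      · exact_mod_cast ht0.ne'
    have harg : ContinuousAt (fun t : ℝ =>
        (1 - v * Complex.exp (-((t:ℂ) * Complex.I)) / (t:ℂ)).arg) t := by
      exact ContinuousAt.comp (g := Complex.arg)
        (f := fun t : ℝ => 1 - v * Complex.exp (-((t:ℂ) * Complex.I)) / (t:ℂ))
        (Complex.continuousAt_arg (Or.inl (hre t ht'))) hinner
    have h1 : ContinuousAt (fun t : ℝ =>
        ‖(t:ℂ) * Complex.exp ((t:ℂ) * Complex.I) - v‖) t := by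
      apply continuous_norm.continuousAt.comp
      exact ((Complex.continuous_ofReal.mul (Complex.continuous_exp.comp
        (Complex.continuous_ofReal.mul continuous_const))).sub continuous_const).continuousAt
    exact (h1.sub continuousAt_id).sub harg
  -- endpoint values
  have hexp_t₁ : Complex.exp ((t₁:ℂ) * Complex.I) = v / (V:ℂ) := by
    have h1 : ((t₁:ℝ):ℂ) * Complex.I = (v.arg:ℂ) * Complex.I + ((n:ℤ):ℂ) * (2 * (π:ℂ) * Complex.I) := by
      simp only [ht₁def]; push_cast; ring
    rw [h1, Complex.exp_add, Complex.exp_int_mul_two_pi_mul_I, mul_one]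
    rw [eq_div_iff hVC, mul_comm]
    exact Complex.norm_mul_exp_arg_mul_I v
  have hexp_t₂ : Complex.exp ((t₂:ℂ) * Complex.I) = -(v / (V:ℂ)) := by
    have h1 : ((t₂:ℝ):ℂ) * Complex.I = (t₁:ℂ) * Complex.I + (π:ℂ) * Complex.I := by
      simp only [ht₂def]; push_cast; ring
    rw [h1, Complex.exp_add, hexp_t₁, Complex.exp_pi_mul_I]
    ring
  have hg₁ : g t₁ = -V := by
    have ht₁0 : (0:ℝ) < t₁ := by linarith
    have hq : (t₁:ℂ) * Complex.exp ((t₁:ℂ) * Complex.I) - v = ((t₁ - V : ℝ):ℂ) * v / (V:ℂ) := by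
      rw [hexp_t₁]; push_cast; field_simp
    have habsq : ‖(t₁:ℂ) * Complex.exp ((t₁:ℂ) * Complex.I) - v‖ = t₁ - V := by
      rw [hq, norm_div, norm_mul, Complex.norm_real, Real.norm_eq_abs, Complex.norm_real, Real.norm_eq_abs, ← hVdef]
      rw [_root_.abs_of_nonneg (by linarith : (0:ℝ) ≤ t₁ - V), _root_.abs_of_nonneg hV0.le]
      field_simp
    have hinner : 1 - v * Complex.exp (-((t₁:ℂ) * Complex.I)) / (t₁:ℂ) = ((1 - V / t₁ : ℝ):ℂ) := by
      rw [Complex.exp_neg, hexp_t₁]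
      push_cast
      field_simp
    have harg : (1 - v * Complex.exp (-((t₁:ℂ) * Complex.I)) / (t₁:ℂ)).arg = 0 := by
      rw [hinner]
      apply Complex.arg_ofReal_of_nonneg
      have : V / t₁ ≤ 1 := by
        rw [div_le_one ht₁0]; linarith
      linarith
    simp only [hgdef, habsq, harg]
    ring
  have hg₂ : g t₂ = V := by
    have ht₂0 : (0:ℝ) < t₂ := by have := pi_pos; linarith
    have hq : (t₂:ℂ) * Complex.exp ((t₂:ℂ) * Complex.I) - v = -(((t₂ + V : ℝ):ℂ) * v / (V:ℂ)) := by
      rw [hexp_t₂]; push_cast; field_simp; ring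
    have habsq : ‖(t₂:ℂ) * Complex.exp ((t₂:ℂ) * Complex.I) - v‖ = t₂ + V := by
      rw [hq, norm_neg, norm_div, norm_mul, Complex.norm_real, Real.norm_eq_abs, Complex.norm_real, Real.norm_eq_abs, ← hVdef]
      rw [_root_.abs_of_nonneg (by linarith : (0:ℝ) ≤ t₂ + V), _root_.abs_of_nonneg hV0.le]
      field_simp
    have hinner : 1 - v * Complex.exp (-((t₂:ℂ) * Complex.I)) / (t₂:ℂ) = ((1 + V / t₂ : ℝ):ℂ) := by
      rw [Complex.exp_neg, hexp_t₂]
      have hvv : v * (-(v / (V:ℂ)))⁻¹ = -(V:ℂ) := by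
        field_simp
      rw [hvv]
      have htC₂ : ((t₂:ℝ):ℂ) ≠ 0 := by exact_mod_cast ht₂0.ne'
      push_cast
      field_simp
      ring
    have harg : (1 - v * Complex.exp (-((t₂:ℂ) * Complex.I)) / (t₂:ℂ)).arg = 0 := by
      rw [hinner]
      apply Complex.arg_ofReal_of_nonneg
      positivity
    simp only [hgdef, habsq, harg]
    ring
  -- IVT
  have hle : t₁ ≤ t₂ := by have := pi_pos; simp only [ht₂def]; linarith
  have h0mem : (0:ℝ) ∈ Set.Icc (g t₁) (g t₂) := by
    rw [hg₁, hg₂]; constructor <;> linarith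
  obtain ⟨t, htmem, hgt⟩ := intermediate_value_Icc hle hgcont h0mem
  -- reconstruct
  have ht' : V + 1 ≤ t := le_trans ht₁ htmem.1
  have ht0 : (0:ℝ) < t := by linarith
  set z : ℂ := 1 - v * Complex.exp (-((t:ℂ) * Complex.I)) / (t:ℂ) with hzdef
  have hee : Complex.exp ((t:ℂ) * Complex.I) * Complex.exp (-((t:ℂ) * Complex.I)) = 1 := by
    rw [← Complex.exp_add]; simp
  have hq : (t:ℂ) * Complex.exp ((t:ℂ) * Complex.I) - v = (t:ℂ) * Complex.exp ((t:ℂ) * Complex.I) * z := by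
    have htC : (t:ℂ) ≠ 0 := by exact_mod_cast ht0.ne'
    field_simp [hzdef]
    have htt : (t:ℂ) * (t:ℂ)⁻¹ = 1 := mul_inv_cancel₀ htC
    linear_combination v * hee + v * Complex.exp ((t:ℂ) * Complex.I) * Complex.exp (-((t:ℂ) * Complex.I)) * htt
  set s : ℝ := ‖(t:ℂ) * Complex.exp ((t:ℂ) * Complex.I) - v‖ with hsdef
  have habsz : ‖z‖ = s / t := by
    have : s = t * ‖z‖ := by
      rw [hsdef, hq, norm_mul, norm_mul, habs_exp, Complex.norm_real, Real.norm_eq_abs, abs_of_pos ht0]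
      ring
    rw [this]; field_simp
  have hs_eq : s = t + z.arg := by
    have : s - t - z.arg = 0 := hgt
    linarith
  have hs0 : 0 ≤ s := norm_nonneg _
  have key : (s:ℂ) * Complex.exp ((s:ℂ) * Complex.I) =
      (t:ℂ) * Complex.exp ((t:ℂ) * Complex.I) - v := by
    have hz : ((‖z‖ : ℝ):ℂ) * Complex.exp ((z.arg:ℂ) * Complex.I) = z :=
      Complex.norm_mul_exp_arg_mul_I z
    have h1 : ((s:ℝ):ℂ) * Complex.I = (t:ℂ) * Complex.I + (z.arg:ℂ) * Complex.I := by
      rw [hs_eq]; push_cast; ring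
    rw [h1, Complex.exp_add]
    have htC : (t:ℂ) ≠ 0 := by exact_mod_cast ht0.ne'
    have hsC : ((s:ℝ):ℂ) = (t:ℂ) * ((‖z‖ : ℝ):ℂ) := by
      rw [habsz]; push_cast; field_simp
    rw [hsC, hq]
    calc (t:ℂ) * ((‖z‖ : ℝ):ℂ) * (Complex.exp ((t:ℂ) * Complex.I) * Complex.exp ((z.arg:ℂ) * Complex.I))
        = (t:ℂ) * Complex.exp ((t:ℂ) * Complex.I) * (((‖z‖ : ℝ):ℂ) * Complex.exp ((z.arg:ℂ) * Complex.I)) := by ring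
      _ = (t:ℂ) * Complex.exp ((t:ℂ) * Complex.I) * z := by rw [hz]
  exact ⟨t, s, ht0.le, hs0, by rw [key]; ring⟩

set_option maxHeartbeats 3000000

lemma curveR_secant (wc : ℂ) (wr : ℝ) :
    ∃ l : ℝ, l ≠ 0 ∧ ∃ t s : ℝ, 0 ≤ t ∧ 0 ≤ s ∧
      Complex.exp ((t:ℂ) * Complex.I) - Complex.exp ((s:ℂ) * Complex.I) = (l:ℂ) * wc ∧
      Real.exp t * Real.sin (2*t) - Real.exp s * Real.sin (2*s) = l * wr := by
  rcases eq_or_ne wc 0 with rfl | hwc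
  · rcases eq_or_ne wr 0 with rfl | hwr
    · exact ⟨1, one_ne_zero, 0, 0, le_refl _, le_refl _, by simp, by simp⟩
    · refine ⟨(Real.exp (π/4) - Real.exp (π/4 + 2*π)) / wr, ?_, π/4, π/4 + 2*π, ?_, ?_, ?_, ?_⟩
      · apply div_ne_zero _ hwr
        have : Real.exp (π/4) < Real.exp (π/4 + 2*π) := by
          apply Real.exp_lt_exp.mpr; have := pi_pos; linarith
        linarith
      · positivity
      · positivity
      · have h1 : ((π/4 + 2*π : ℝ):ℂ) * Complex.I
            = ((π/4:ℝ):ℂ) * Complex.I + ((1:ℤ):ℂ) * (2*(π:ℂ)*Complex.I) := by push_cast; ring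
        rw [h1, Complex.exp_add, Complex.exp_int_mul_two_pi_mul_I, mul_one]
        simp
      · have h1 : 2 * (π/4 + 2*π) = 2*(π/4) + ((2:ℤ):ℝ)*(2*π) := by push_cast; ring
        rw [h1, Real.sin_add_int_mul_two_pi]
        have h2 : 2*(π/4:ℝ) = π/2 := by ring
        rw [h2, Real.sin_pi_div_two]
        field_simp
  -- main case
  set W : ℝ := ‖wc‖ with hWdef
  have hW0 : 0 < W := norm_pos_iff.mpr hwc
  have hWC : ((W:ℝ):ℂ) ≠ 0 := by exact_mod_cast hW0.ne'
  set z₀ : ℂ := -Complex.I * wc with hz₀def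
  have hz₀ : z₀ ≠ 0 := by
    simp only [hz₀def]
    exact mul_ne_zero (neg_ne_zero.mpr Complex.I_ne_zero) hwc
  set m₀ : ℝ := z₀.arg with hm₀def
  have habsz₀ : ‖z₀‖ = W := by
    rw [hz₀def, norm_mul, norm_neg, Complex.norm_I, one_mul]
  have hexp_m₀ : Complex.exp ((m₀:ℂ) * Complex.I) = z₀ / (W:ℂ) := by
    rw [eq_div_iff hWC, mul_comm, ← habsz₀]
    exact Complex.norm_mul_exp_arg_mul_I z₀
  set c : ℝ := wr / W with hcdef
  obtain ⟨k, hk⟩ := exists_nat_ge ((max π (2*(2*|c|+1)) - m₀) / (2*π))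
  set m : ℝ := m₀ + 2*π*k with hmdef
  have hmX : max π (2*(2*|c|+1)) ≤ m := by
    have h2π : (0:ℝ) < 2*π := by positivity
    have := (div_le_iff₀ h2π).mp hk
    simp only [hmdef]; nlinarith
  have hmpi : π ≤ m := le_trans (le_max_left _ _) hmX
  have hm2c : 2*(2*|c|+1) ≤ m := le_trans (le_max_right _ _) hmX
  have hem : 2*(2*|c|+1) ≤ Real.exp m := by
    have := Real.add_one_le_exp m
    linarith
  have hexp_m : Complex.exp ((m:ℂ) * Complex.I) = z₀ / (W:ℂ) := by
    have h1 : ((m:ℝ):ℂ) * Complex.I = (m₀:ℂ) * Complex.I + ((k:ℤ):ℂ) * (2*(π:ℂ)*Complex.I) := by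
      simp only [hmdef]; push_cast; ring
    rw [h1, Complex.exp_add, Complex.exp_int_mul_two_pi_mul_I, mul_one, hexp_m₀]
  set G : ℝ → ℝ := fun d =>
    Real.exp (m+d) * Real.sin (2*(m+d)) - Real.exp (m-d) * Real.sin (2*(m-d)) - 2 * Real.sin d * c
    with hGdef
  have hGcont : Continuous G := by
    simp only [hGdef]
    fun_prop
  have hcabs : 0 ≤ |c| := abs_nonneg c
  have key : ∃ d, 0 < d ∧ d ≤ π ∧ 0 < Real.sin d ∧ G d = 0 := by
    have hsin2 : Real.sin (2*m) ^ 2 + Real.cos (2*m) ^ 2 = 1 := Real.sin_sq_add_cos_sq _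
    set A := Real.sin (2*m) with hA
    set B := Real.cos (2*m) with hB
    have hGpi2 : G (π/2) = -A * (Real.exp (m+π/2) - Real.exp (m-π/2)) - 2*c := by
      simp only [hGdef]
      have h1 : 2*(m+π/2) = 2*m + π := by ring
      have h2 : 2*(m-π/2) = 2*m - π := by ring
      rw [h1, h2, Real.sin_add_pi, Real.sin_sub_pi, Real.sin_pi_div_two]
      ring
    have hGpi : G π = A * (Real.exp (m+π) - Real.exp (m-π)) := by
      simp only [hGdef]
      have h1 : 2*(m+π) = 2*m + 2*π := by ring
      have h2 : 2*(m-π) = 2*m - 2*π := by ring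
      rw [h1, h2, Real.sin_add_two_pi, Real.sin_sub_two_pi, Real.sin_pi]
      ring
    have hGpi4 : G (π/4) = B * (Real.exp (m+π/4) + Real.exp (m-π/4)) - 2*Real.sin (π/4)*c := by
      simp only [hGdef]
      have h1 : 2*(m+π/4) = 2*m + π/2 := by ring
      have h2 : 2*(m-π/4) = 2*m - π/2 := by ring
      rw [h1, h2, Real.sin_add_pi_div_two, Real.sin_sub_pi_div_two]
      ring
    have hG3pi4 : G (3*π/4)
        = -B * (Real.exp (m+3*π/4) + Real.exp (m-3*π/4)) - 2*Real.sin (3*π/4)*c := by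
      simp only [hGdef]
      have h1 : 2*(m+3*π/4) = (2*m + π/2) + π := by ring
      have h2 : 2*(m-3*π/4) = (2*m - π/2) - π := by ring
      rw [h1, h2, Real.sin_add_pi, Real.sin_sub_pi, Real.sin_add_pi_div_two,
        Real.sin_sub_pi_div_two]
      ring
    -- exp bounds
    have hpi3 : (3:ℝ) < π := Real.pi_gt_three
    have hE1 : Real.exp m ≤ Real.exp (m+π/2) - Real.exp (m-π/2) := by
      have h1 : Real.exp (m+π/2) = Real.exp m * Real.exp (π/2) := by rw [← Real.exp_add]
      have h2 : (2:ℝ) ≤ Real.exp (π/2) := by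
        have := Real.add_one_le_exp (π/2); linarith
      have h3 : Real.exp (m-π/2) ≤ Real.exp m := Real.exp_le_exp.mpr (by linarith)
      have h4 : Real.exp m * 2 ≤ Real.exp m * Real.exp (π/2) :=
        mul_le_mul_of_nonneg_left h2 (Real.exp_pos m).le
      linarith
    have hE2 : Real.exp m ≤ Real.exp (m+π) - Real.exp (m-π) := by
      have h1 : Real.exp (m+π) = Real.exp m * Real.exp π := by rw [← Real.exp_add]
      have h2 : (2:ℝ) ≤ Real.exp π := by
        have := Real.add_one_le_exp π; linarith
      have h3 : Real.exp (m-π) ≤ Real.exp m := Real.exp_le_exp.mpr (by linarith)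
      have h4 : Real.exp m * 2 ≤ Real.exp m * Real.exp π :=
        mul_le_mul_of_nonneg_left h2 (Real.exp_pos m).le
      linarith
    have hF1 : Real.exp m ≤ Real.exp (m+π/4) + Real.exp (m-π/4) := by
      have h1 : Real.exp m ≤ Real.exp (m+π/4) := Real.exp_le_exp.mpr (by linarith)
      have := Real.exp_pos (m-π/4)
      linarith
    have hF2 : Real.exp m ≤ Real.exp (m+3*π/4) + Real.exp (m-3*π/4) := by
      have h1 : Real.exp m ≤ Real.exp (m+3*π/4) := Real.exp_le_exp.mpr (by linarith)
      have := Real.exp_pos (m-3*π/4)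
      linarith
    have hsinb : ∀ x : ℝ, |Real.sin x| ≤ 1 := fun x => Real.abs_sin_le_one x
    have hc' : -|c| ≤ c ∧ c ≤ |c| := ⟨neg_abs_le c, le_abs_self c⟩
    have hsc : |Real.sin (π/4) * c| ≤ |c| := by
      rw [abs_mul]
      calc |Real.sin (π/4)| * |c| ≤ 1 * |c| :=
            mul_le_mul_of_nonneg_right (hsinb _) hcabs
        _ = |c| := one_mul _
    have hsc' : -|c| ≤ Real.sin (π/4) * c ∧ Real.sin (π/4) * c ≤ |c| :=
      abs_le.mp hsc
    have hexppos := Real.exp_pos m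
    clear_value G A B c m m₀ z₀ W
    rcases le_or_gt (1/2) |A| with hAbig | hAsmall
    · -- use interval [π/2, π]
      rcases le_or_gt 0 A with hApos | hAneg
      · have hA12 : (1/2:ℝ) ≤ A := by rwa [_root_.abs_of_nonneg hApos] at hAbig
        have h1 : (1/2)*(Real.exp m) ≤ A * (Real.exp (m+π/2) - Real.exp (m-π/2)) := by
          nlinarith [hE1, hA12, hexppos]
        have h2 : (1/2)*(Real.exp m) ≤ A * (Real.exp (m+π) - Real.exp (m-π)) := by
          nlinarith [hE2, hA12, hexppos]
        have hGpi_pos : 0 < G π := by rw [hGpi]; linarith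
        have hGpi2_neg : G (π/2) ≤ -1 := by rw [hGpi2]; linarith [hc'.1, hc'.2]
        have hmem : (0:ℝ) ∈ Set.uIcc (G (π/2)) (G π) :=
          Set.mem_uIcc.mpr (Or.inl ⟨by linarith, hGpi_pos.le⟩)
        obtain ⟨d, hdmem, hGd⟩ := intermediate_value_uIcc hGcont.continuousOn hmem
        rw [Set.uIcc_of_le (by linarith : π/2 ≤ π)] at hdmem
        have hdlt : d < π := by
          rcases lt_or_eq_of_le hdmem.2 with h | h
          · exact h
          · exfalso; rw [h] at hGd; rw [hGd] at hGpi_pos; exact lt_irrefl 0 hGpi_pos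
        have hd0 : 0 < d := by have := pi_pos; linarith [hdmem.1]
        exact ⟨d, hd0, hdmem.2, Real.sin_pos_of_pos_of_lt_pi hd0 hdlt, hGd⟩
      · have hA12 : A ≤ -(1/2:ℝ) := by
          rw [_root_.abs_of_neg hAneg] at hAbig; linarith
        have h1 : A * (Real.exp (m+π/2) - Real.exp (m-π/2)) ≤ -((1/2)*(Real.exp m)) := by
          nlinarith [hE1, hA12, hexppos]
        have h2 : A * (Real.exp (m+π) - Real.exp (m-π)) ≤ -((1/2)*(Real.exp m)) := by
          nlinarith [hE2, hA12, hexppos]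
        have hGpi_neg : G π < 0 := by rw [hGpi]; linarith
        have hGpi2_pos : 1 ≤ G (π/2) := by rw [hGpi2]; linarith [hc'.1, hc'.2]
        have hmem : (0:ℝ) ∈ Set.uIcc (G (π/2)) (G π) :=
          Set.mem_uIcc.mpr (Or.inr ⟨hGpi_neg.le, by linarith⟩)
        obtain ⟨d, hdmem, hGd⟩ := intermediate_value_uIcc hGcont.continuousOn hmem
        rw [Set.uIcc_of_le (by linarith : π/2 ≤ π)] at hdmem
        have hdlt : d < π := by
          rcases lt_or_eq_of_le hdmem.2 with h | h
          · exact h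
          · exfalso; rw [h] at hGd; rw [hGd] at hGpi_neg; exact lt_irrefl 0 hGpi_neg
        have hd0 : 0 < d := by have := pi_pos; linarith [hdmem.1]
        exact ⟨d, hd0, hdmem.2, Real.sin_pos_of_pos_of_lt_pi hd0 hdlt, hGd⟩
    · -- |A| < 1/2 so |B| ≥ 1/2
      have hBbig : (1/2:ℝ) ≤ |B| := by
        nlinarith [_root_.sq_abs A, _root_.sq_abs B, abs_nonneg A, abs_nonneg B, hsin2, hAsmall]
      have hsin34 : Real.sin (3*π/4) = Real.sin (π/4) := by
        have h1 : (3*π/4 : ℝ) = π - π/4 := by ring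
        rw [h1, Real.sin_pi_sub]
      rcases le_or_gt 0 B with hBpos | hBneg
      · have hB12 : (1/2:ℝ) ≤ B := by rwa [_root_.abs_of_nonneg hBpos] at hBbig
        have h1 : (1/2)*(Real.exp m) ≤ B * (Real.exp (m+π/4) + Real.exp (m-π/4)) := by
          nlinarith [hF1, hB12, hexppos]
        have h2 : (1/2)*(Real.exp m) ≤ B * (Real.exp (m+3*π/4) + Real.exp (m-3*π/4)) := by
          nlinarith [hF2, hB12, hexppos]
        have hG4_pos : 1 ≤ G (π/4) := by rw [hGpi4]; linarith [hsc'.1, hsc'.2]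
        have hG34_neg : G (3*π/4) ≤ -1 := by
          rw [hG3pi4, hsin34]; linarith [hsc'.1, hsc'.2]
        have hmem : (0:ℝ) ∈ Set.uIcc (G (π/4)) (G (3*π/4)) :=
          Set.mem_uIcc.mpr (Or.inr ⟨by linarith, by linarith⟩)
        obtain ⟨d, hdmem, hGd⟩ := intermediate_value_uIcc hGcont.continuousOn hmem
        rw [Set.uIcc_of_le (by linarith : π/4 ≤ 3*π/4)] at hdmem
        have hd0 : 0 < d := by have := pi_pos; linarith [hdmem.1]
        have hdlt : d < π := by have := pi_pos; linarith [hdmem.2]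
        exact ⟨d, hd0, by linarith [hdmem.2], Real.sin_pos_of_pos_of_lt_pi hd0 hdlt, hGd⟩
      · have hB12 : B ≤ -(1/2:ℝ) := by rw [_root_.abs_of_neg hBneg] at hBbig; linarith
        have h1 : B * (Real.exp (m+π/4) + Real.exp (m-π/4)) ≤ -((1/2)*(Real.exp m)) := by
          nlinarith [hF1, hB12, hexppos]
        have h2 : B * (Real.exp (m+3*π/4) + Real.exp (m-3*π/4)) ≤ -((1/2)*(Real.exp m)) := by
          nlinarith [hF2, hB12, hexppos]
        have hG4_neg : G (π/4) ≤ -1 := by rw [hGpi4]; linarith [hsc'.1, hsc'.2]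
        have hG34_pos : 1 ≤ G (3*π/4) := by
          rw [hG3pi4, hsin34]; linarith [hsc'.1, hsc'.2]
        have hmem : (0:ℝ) ∈ Set.uIcc (G (π/4)) (G (3*π/4)) :=
          Set.mem_uIcc.mpr (Or.inl ⟨by linarith, by linarith⟩)
        obtain ⟨d, hdmem, hGd⟩ := intermediate_value_uIcc hGcont.continuousOn hmem
        rw [Set.uIcc_of_le (by linarith : π/4 ≤ 3*π/4)] at hdmem
        have hd0 : 0 < d := by have := pi_pos; linarith [hdmem.1]
        have hdlt : d < π := by have := pi_pos; linarith [hdmem.2]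
        exact ⟨d, hd0, by linarith [hdmem.2], Real.sin_pos_of_pos_of_lt_pi hd0 hdlt, hGd⟩
  obtain ⟨d, hd0, hdpi, hsind, hGd⟩ := key
  refine ⟨2 * Real.sin d / W, div_ne_zero (by positivity) hW0.ne', m + d, m - d,
    by linarith [pi_pos], by linarith, ?_, ?_⟩
  · -- complex equation
    have e1 : Complex.exp ((((m+d):ℝ):ℂ) * Complex.I)
        = Complex.exp ((m:ℂ) * Complex.I) * Complex.exp ((d:ℂ) * Complex.I) := by
      rw [← Complex.exp_add]; congr 1; push_cast; ring
    have e2 : Complex.exp ((((m-d):ℝ):ℂ) * Complex.I)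
        = Complex.exp ((m:ℂ) * Complex.I) * Complex.exp (((-d:ℝ):ℂ) * Complex.I) := by
      rw [← Complex.exp_add]; congr 1; push_cast; ring
    have e5 : Complex.exp ((d:ℂ) * Complex.I) - Complex.exp (((-d:ℝ):ℂ) * Complex.I)
        = 2 * ((Real.sin d : ℝ):ℂ) * Complex.I := by
      rw [Complex.exp_mul_I, Complex.exp_mul_I]
      push_cast
      rw [Complex.cos_neg, Complex.sin_neg, ← Complex.ofReal_sin]
      ring
    calc Complex.exp ((((m+d):ℝ):ℂ) * Complex.I) - Complex.exp ((((m-d):ℝ):ℂ) * Complex.I)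
        = Complex.exp ((m:ℂ) * Complex.I)
            * (Complex.exp ((d:ℂ) * Complex.I) - Complex.exp (((-d:ℝ):ℂ) * Complex.I)) := by
          rw [e1, e2]; ring
      _ = (z₀ / (W:ℂ)) * (2 * ((Real.sin d : ℝ):ℂ) * Complex.I) := by rw [hexp_m, e5]
      _ = (((2 * Real.sin d / W : ℝ)):ℂ) * wc := by
          rw [hz₀def]
          push_cast
          field_simp
          simp only [← Complex.ofReal_sin]
          linear_combination (-((Real.sin d : ℝ):ℂ)) * Complex.I_sq
  · -- real equation
    have h := hGd
    simp only [hGdef, hcdef] at h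
    field_simp at h ⊢
    linarith

/-- For `ℛ_r = 𝒮^{r−1} × ℛ ⊆ ℝ^{2r+1}`, every finite set `U₀` of at most `2r` vectors misses
some secant: there are `a ≠ b` in `ℛ_r` with `a − b` orthogonal to all of `U₀`. Hence the
linear response with image `ℛ_r` has no universal distinguishing set of cardinality `2r`, and
the bound `2r+1` cannot be lowered. -/
theorem no_universal_distinguishing_set_of_card_two_r
    (r : ℕ) (hr : 0 < r)
    (S : Set ℂ)
    (hS : S = {ζ : ℂ | ∃ t : ℝ, 0 ≤ t ∧ ζ = (t : ℂ) * Complex.exp ((t : ℂ) * Complex.I)})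
    (R : Set (ℂ × ℝ))
    (hR : R = {p : ℂ × ℝ | ∃ t : ℝ, 0 ≤ t ∧
      p = (Complex.exp ((t : ℂ) * Complex.I), Real.exp t * Real.sin (2 * t))})
    (Rr : Set ((Fin (r - 1) → ℂ) × ℂ × ℝ))
    (hRr : Rr = {p | (∀ i, p.1 i ∈ S) ∧ p.2 ∈ R}) :
    ∀ U₀ : Finset ((Fin (r - 1) → ℂ) × ℂ × ℝ), U₀.card ≤ 2 * r →
      ∃ a ∈ Rr, ∃ b ∈ Rr, a ≠ b ∧ ∀ u ∈ U₀, euclidDot (a - b) u = 0 := by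
  intro U₀ hcard
  classical
  -- the bilinear form as a linear map in the first argument
  let T : ((Fin (r - 1) → ℂ) × ℂ × ℝ) →ₗ[ℝ] (↥U₀ → ℝ) :=
    { toFun := fun a => fun u => euclidDot a u.1
      map_add' := by
        intro a b
        funext u
        simp only [euclidDot, Prod.fst_add, Prod.snd_add, Pi.add_apply, add_mul,
          Complex.add_re, Pi.add_apply]
        rw [Finset.sum_add_distrib]
        ring
      map_smul' := by
        intro cc a
        funext u
        simp only [euclidDot, Prod.smul_fst, Prod.smul_snd, Pi.smul_apply,
          Complex.real_smul, smul_eq_mul, RingHom.id_apply, mul_assoc,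
          Complex.re_ofReal_mul]
        rw [mul_add, mul_add, Finset.mul_sum] }
  have hTapp : ∀ (a : (Fin (r - 1) → ℂ) × ℂ × ℝ) (u : ↥U₀), T a u = euclidDot a u.1 :=
    fun a u => rfl
  -- dimension count : T is not injective
  have hni : ¬ Function.Injective T := by
    intro hinj
    have hle := LinearMap.finrank_le_finrank_of_injective hinj
    have h1 : Module.finrank ℝ ((Fin (r - 1) → ℂ) × ℂ × ℝ) = 2*(r-1) + 3 := by
      rw [Module.finrank_prod, Module.finrank_prod]
      rw [Module.finrank_pi_fintype]
      simp [Complex.finrank_real_complex]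
      ring
    have h2 : Module.finrank ℝ (↥U₀ → ℝ) = U₀.card := by
      rw [Module.finrank_fintype_fun_eq_card, Fintype.card_coe]
    rw [h1, h2] at hle
    omega
  rw [Function.not_injective_iff] at hni
  obtain ⟨x, y, hxy, hne⟩ := hni
  set w := x - y with hwdef
  have hw0 : w ≠ 0 := sub_ne_zero_of_ne hne
  have hTw : T w = 0 := by rw [map_sub, hxy, sub_self]
  -- curve points
  obtain ⟨l, hl, t, s, ht, hs, h1, h2⟩ := curveR_secant w.2.1 w.2.2
  have hspir : ∀ i : Fin (r - 1), ∃ tt ss : ℝ, 0 ≤ tt ∧ 0 ≤ ss ∧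
      (tt : ℂ) * Complex.exp ((tt : ℂ) * Complex.I) -
        (ss : ℂ) * Complex.exp ((ss : ℂ) * Complex.I) = (l:ℂ) * w.1 i :=
    fun i => spiral_secant _
  choose tf sf htf hsf heq using hspir
  set a : (Fin (r - 1) → ℂ) × ℂ × ℝ :=
    (fun i => (tf i : ℂ) * Complex.exp ((tf i : ℂ) * Complex.I),
      (Complex.exp ((t:ℂ) * Complex.I), Real.exp t * Real.sin (2 * t))) with hadef
  set b : (Fin (r - 1) → ℂ) × ℂ × ℝ :=
    (fun i => (sf i : ℂ) * Complex.exp ((sf i : ℂ) * Complex.I),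
      (Complex.exp ((s:ℂ) * Complex.I), Real.exp s * Real.sin (2 * s))) with hbdef
  have hab : a - b = l • w := by
    have hfst : (a - b).1 = (l • w).1 := by
      funext i
      simp only [hadef, hbdef, Prod.fst_sub, Pi.sub_apply, Prod.smul_fst, Pi.smul_apply,
        Complex.real_smul]
      exact heq i
    have hsnd1 : (a - b).2.1 = (l • w).2.1 := by
      simp only [hadef, hbdef, Prod.snd_sub, Prod.fst_sub, Prod.smul_snd, Prod.smul_fst,
        Complex.real_smul]
      exact h1
    have hsnd2 : (a - b).2.2 = (l • w).2.2 := by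
      simp only [hadef, hbdef, Prod.snd_sub, Prod.smul_snd, smul_eq_mul]
      exact h2
    exact Prod.ext hfst (Prod.ext hsnd1 hsnd2)
  refine ⟨a, ?_, b, ?_, ?_, ?_⟩
  · rw [hRr]
    refine ⟨fun i => ?_, ?_⟩
    · rw [hS]; exact ⟨tf i, htf i, rfl⟩
    · rw [hR]; exact ⟨t, ht, rfl⟩
  · rw [hRr]
    refine ⟨fun i => ?_, ?_⟩
    · rw [hS]; exact ⟨sf i, hsf i, rfl⟩
    · rw [hR]; exact ⟨s, hs, rfl⟩
  · intro h
    have : a - b = 0 := by rw [h, sub_self]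
    rw [hab] at this
    rcases smul_eq_zero.mp this with h' | h'
    · exact hl h'
    · exact hw0 h'
  · intro u hu
    have hT0 : T (l • w) = 0 := by rw [map_smul, hTw, smul_zero]
    have := congrFun hT0 ⟨u, hu⟩
    rw [hTapp] at this
    rw [hab]
    exact this
end

section
/- Fix a positive integer r, let ℛ_r = 𝒮^{r−1} × ℛ ⊆ ℝ^{2r+1} (where 𝒮 = {t·e^{it} : t ≥ 0} ⊆ ℂ and ℛ = {(e^{it}, e^{t}·sin(2t)) : t ≥ 0} ⊆ ℂ × ℝ), and define ψ : ℝ → ℝ^{2r+1} by ψ(u) = (1, u, u², …, u^{2r}). Then for every finite set Ũ₀ ⊆ ℝ of cardinality at most 2r there exist a, b ∈ ℛ_r and u* ∈ ℝ such that ⟨a − b, ψ(u*)⟩ ≠ 0 while ⟨a − b, ψ(u)⟩ = 0 for all u ∈ Ũ₀. Hence the scalar-input analytic response β̃(x,u) = f(x)·ψ(u), where f has image ℛ_r, has no universal distinguishing set of cardinality 2r. -/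
/-- The Veronese-type curve `ψ(u) = (1, u, u², …, u^{2r})`, written as an element of
`ℂ^{r−1} × ℂ × ℝ ≅ ℝ^{2r+1}` (coordinate `j` of `ℝ^{2r+1}` is `u^j`). -/
noncomputable def psiCurve (r : ℕ) (u : ℝ) : (Fin (r - 1) → ℂ) × ℂ × ℝ :=
  (fun i => (↑(u ^ (2 * (i : ℕ))) : ℂ) + (↑(u ^ (2 * (i : ℕ) + 1)) : ℂ) * Complex.I,
    ((↑(u ^ (2 * r - 2)) : ℂ) + (↑(u ^ (2 * r - 1)) : ℂ) * Complex.I, u ^ (2 * r)))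

lemma spiral_diff (z : ℂ) :
    ∃ t₁ t₂ : ℝ, 0 ≤ t₁ ∧ 0 ≤ t₂ ∧
      (t₁ : ℂ) * Complex.exp ((t₁ : ℂ) * Complex.I) -
        (t₂ : ℂ) * Complex.exp ((t₂ : ℂ) * Complex.I) = z := by
  rcases eq_or_ne z 0 with rfl | hz
  · exact ⟨0, 0, le_refl _, le_refl _, by simp⟩
  set ρ : ℝ := ‖z‖ with hρdef
  have hρ : 0 < ρ := by simpa [hρdef] using (norm_pos_iff.mpr hz)
  obtain ⟨k, hk⟩ := exists_nat_gt (ρ + 1 + Real.pi)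
  set τa : ℝ := Complex.arg z + 2 * Real.pi * k with hτadef
  set τb : ℝ := τa + Real.pi with hτbdef
  have hpi : (1:ℝ) < Real.pi := by linarith [Real.pi_gt_three]
  have hτa_big : ρ + Real.pi + 1 ≤ τa := by
    have h1 : -Real.pi < Complex.arg z := Complex.neg_pi_lt_arg z
    have h2 : (k:ℝ) ≤ 2 * Real.pi * k := by nlinarith [Nat.cast_nonneg (α := ℝ) k]
    have h3 : ρ + 1 + Real.pi < (k:ℝ) := hk
    simp only [hτadef]; nlinarith
  set f : ℝ → ℂ := fun τ => (τ : ℂ) - z * Complex.exp (-(τ:ℂ) * Complex.I) with hfdef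
  have hre : ∀ τ : ℝ, τa ≤ τ → 0 < (f τ).re := by
    intro τ hτ
    have hrle : (z * Complex.exp (-(τ:ℂ) * Complex.I)).re ≤ ρ := by
      calc (z * Complex.exp (-(τ:ℂ) * Complex.I)).re
          ≤ ‖z * Complex.exp (-(τ:ℂ) * Complex.I)‖ := Complex.re_le_norm _
        _ = ρ := by
            rw [norm_mul]
            have h4 : (-(τ:ℂ)) * Complex.I = ((-τ : ℝ):ℂ) * Complex.I := by push_cast; ring
            rw [h4, Complex.norm_exp_ofReal_mul_I, mul_one]
    have h5 : (f τ).re = τ - (z * Complex.exp (-(τ:ℂ) * Complex.I)).re := by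
      simp [hfdef]
    have h6 : ρ + Real.pi + 1 ≤ τ := le_trans hτa_big hτ
    rw [h5]; nlinarith
  have hfslit : ∀ τ : ℝ, τa ≤ τ → f τ ∈ Complex.slitPlane := by
    intro τ hτ
    rw [Complex.mem_slitPlane_iff]
    exact Or.inl (hre τ hτ)
  -- ξ
  set ξ : ℝ → ℝ := fun τ => ‖f τ‖ - τ - Complex.arg (f τ) with hξdef
  have hcont : ContinuousOn ξ (Set.Icc τa τb) := by
    have hfc : Continuous f := by
      apply Continuous.sub Complex.continuous_ofReal
      exact continuous_const.mul ((Complex.continuous_ofReal.neg.mul continuous_const).cexp)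
    intro τ hτ
    have h1 : ContinuousAt ξ τ := by
      have harg : ContinuousAt (fun τ => Complex.arg (f τ)) τ :=
        (Complex.continuousAt_arg (hfslit τ hτ.1)).comp hfc.continuousAt
      exact ((continuous_norm.comp hfc).continuousAt.sub continuousAt_id).sub harg
    exact h1.continuousWithinAt
  -- value at τa
  have hzτa : z * Complex.exp (-(τa:ℂ) * Complex.I) = (ρ:ℂ) := by
    have h1 : (-(τa:ℂ)) * Complex.I
        = (-(Complex.arg z) : ℂ) * Complex.I + (-((k:ℕ):ℂ)) * (2 * Real.pi * Complex.I) := by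
      simp only [hτadef]; push_cast; ring
    have hone : Complex.exp ((-((k:ℕ):ℂ)) * (2 * Real.pi * Complex.I)) = 1 := by
      have := Complex.exp_int_mul_two_pi_mul_I (-(k:ℤ))
      push_cast at this
      exact this
    rw [h1, Complex.exp_add, hone, mul_one]
    conv_lhs => rw [← Complex.norm_mul_exp_arg_mul_I z]
    rw [mul_assoc, ← Complex.exp_add]
    simp [hρdef]
  have hfa : f τa = ((τa - ρ : ℝ) : ℂ) := by
    simp only [hfdef, hzτa]; push_cast; ring
  have hξa : ξ τa = -ρ := by
    have h1 : (0:ℝ) ≤ τa - ρ := by nlinarith [Real.pi_pos]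
    simp only [hξdef, hfa, Complex.norm_real, Real.norm_eq_abs, Complex.arg_ofReal_of_nonneg h1,
      abs_of_nonneg h1]
    ring
  -- value at τb
  have hzτb : z * Complex.exp (-(τb:ℂ) * Complex.I) = -(ρ:ℂ) := by
    have h1 : (-(τb:ℂ)) * Complex.I = (-(τa:ℂ)) * Complex.I + (-(Real.pi : ℂ)) * Complex.I := by
      simp only [hτbdef]; push_cast; ring
    rw [h1, Complex.exp_add, ← mul_assoc, hzτa]
    have h2 : Complex.exp (-(Real.pi:ℂ) * Complex.I) = -1 := by
      rw [neg_mul, Complex.exp_neg, Complex.exp_pi_mul_I]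
      norm_num
    rw [h2]; ring
  have hfb : f τb = ((τb + ρ : ℝ) : ℂ) := by
    simp only [hfdef, hzτb]; push_cast; ring
  have hξb : ξ τb = ρ := by
    have h1 : (0:ℝ) ≤ τb + ρ := by nlinarith [Real.pi_pos]
    simp only [hξdef, hfb, Complex.norm_real, Real.norm_eq_abs, Complex.arg_ofReal_of_nonneg h1,
      abs_of_nonneg h1]
    ring
  have hab : τa ≤ τb := by simp only [hτbdef]; nlinarith [Real.pi_pos]
  have hivt := intermediate_value_Icc hab hcont
  have h0mem : (0:ℝ) ∈ Set.Icc (ξ τa) (ξ τb) := by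
    rw [hξa, hξb]; constructor <;> linarith
  obtain ⟨τ, hτmem, hτ0⟩ := hivt h0mem
  -- conclude
  have hτa_le : τa ≤ τ := hτmem.1
  set w := f τ with hwdef
  have hw0 : w ≠ 0 := by
    intro h
    have := hre τ hτa_le
    rw [← hwdef] at this
    rw [h] at this; simp at this
  set t₂ : ℝ := τ + Complex.arg w with ht₂def
  have habsw : (‖w‖ : ℝ) = t₂ := by
    have : ξ τ = 0 := hτ0
    simp only [hξdef] at this
    simp only [ht₂def]; linarith
  have ht₂pos : 0 ≤ t₂ := by
    have h1 := Complex.neg_pi_lt_arg w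
    have h2 : ρ + Real.pi + 1 ≤ τ := le_trans hτa_big hτa_le
    simp only [ht₂def]; nlinarith
  refine ⟨τ, t₂, by nlinarith [Complex.neg_pi_lt_arg w, le_trans hτa_big hτa_le, hρ], ht₂pos, ?_⟩
  have hw_polar : w = (‖w‖ : ℂ) * Complex.exp ((Complex.arg w : ℂ) * Complex.I) :=
    (Complex.norm_mul_exp_arg_mul_I w).symm
  have key : (t₂ : ℂ) * Complex.exp ((t₂:ℂ) * Complex.I) = w * Complex.exp ((τ:ℂ) * Complex.I) := by
    have h1 : ((t₂ : ℝ) : ℂ) = ((‖w‖ : ℝ) : ℂ) := by rw [habsw]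
    have hexp : Complex.exp ((t₂:ℂ) * Complex.I)
        = Complex.exp ((Complex.arg w : ℂ) * Complex.I) * Complex.exp ((τ:ℂ) * Complex.I) := by
      rw [← Complex.exp_add]
      congr 1
      have : (t₂ : ℂ) = (τ:ℂ) + (Complex.arg w : ℂ) := by
        simp only [ht₂def]; push_cast; ring
      rw [this]; ring
    rw [hexp, h1, ← mul_assoc, ← hw_polar]
  rw [key]
  have : (τ:ℂ) - w = z * Complex.exp (-(τ:ℂ) * Complex.I) := by
    simp only [hwdef, hfdef]; ring
  calc (τ:ℂ) * Complex.exp ((τ:ℂ) * Complex.I) - w * Complex.exp ((τ:ℂ) * Complex.I)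
      = ((τ:ℂ) - w) * Complex.exp ((τ:ℂ) * Complex.I) := by ring
    _ = z * (Complex.exp (-(τ:ℂ) * Complex.I) * Complex.exp ((τ:ℂ) * Complex.I)) := by
        rw [this]; ring
    _ = z := by rw [← Complex.exp_add]; simp

section RDiff
open Real

lemma exp_diff_eq (a φ ρ : ℝ) (hρ : ρ ≠ 0) :
    Complex.exp (((a + φ : ℝ):ℂ) * Complex.I) - Complex.exp (((a + π - φ : ℝ):ℂ) * Complex.I)
      = ((2 * Real.cos φ / ρ : ℝ):ℂ) * (((ρ:ℝ):ℂ) * Complex.exp (((a:ℝ):ℂ) * Complex.I)) := by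
  have hπI : Complex.exp (((π:ℝ):ℂ) * Complex.I) = -1 := by
    simpa using Complex.exp_pi_mul_I
  have hsplit1 : ((a + φ : ℝ):ℂ) * Complex.I
      = ((a:ℝ):ℂ) * Complex.I + ((φ:ℝ):ℂ) * Complex.I := by push_cast; ring
  have hsplit2 : ((a + π - φ : ℝ):ℂ) * Complex.I
      = ((a:ℝ):ℂ) * Complex.I + (((π:ℝ):ℂ) * Complex.I + (-((φ:ℝ):ℂ)) * Complex.I) := by
    push_cast; ring
  rw [hsplit1, hsplit2, Complex.exp_add, Complex.exp_add, Complex.exp_add, hπI]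
  have htwo : Complex.exp (((φ:ℝ):ℂ) * Complex.I) + Complex.exp ((-((φ:ℝ):ℂ)) * Complex.I)
      = 2 * Complex.cos ((φ:ℝ):ℂ) := (Complex.two_cos _).symm
  have hcosreal : Complex.cos ((φ:ℝ):ℂ) = ((Real.cos φ : ℝ):ℂ) :=
    (Complex.ofReal_cos φ).symm
  have hρne : ((ρ:ℝ):ℂ) ≠ 0 := by
    simpa only [ne_eq, Complex.ofReal_eq_zero] using hρ
  have hc : ((2 * Real.cos φ / ρ : ℝ):ℂ)
      = 2 * ((Real.cos φ : ℝ):ℂ) / ((ρ:ℝ):ℂ) := by push_cast; ring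
  rw [hc]
  have hrhs : 2 * ((Real.cos φ : ℝ):ℂ) / ((ρ:ℝ):ℂ)
      * (((ρ:ℝ):ℂ) * Complex.exp (((a:ℝ):ℂ) * Complex.I))
      = 2 * ((Real.cos φ : ℝ):ℂ) * Complex.exp (((a:ℝ):ℂ) * Complex.I) := by
    field_simp
  rw [hrhs]
  simp only [neg_mul] at htwo ⊢
  linear_combination Complex.exp (((a:ℝ):ℂ) * Complex.I) * htwo
    + 2 * Complex.exp (((a:ℝ):ℂ) * Complex.I) * hcosreal

lemma R_diff (z : ℂ) :
    ∃ lam t₁ t₂ : ℝ, lam ≠ 0 ∧ 0 ≤ t₁ ∧ 0 ≤ t₂ ∧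
      Complex.exp ((t₁:ℂ) * Complex.I) - Complex.exp ((t₂:ℂ) * Complex.I) = (lam:ℂ) * z ∧
      Real.exp t₁ * Real.sin (2*t₁) - Real.exp t₂ * Real.sin (2*t₂) = lam := by
  rcases eq_or_ne z 0 with rfl | hz
  · refine ⟨Real.exp (π/4 + 2*π) - Real.exp (π/4), π/4 + 2*π, π/4, ?_, by positivity,
      by positivity, ?_, ?_⟩
    · have : Real.exp (π/4) < Real.exp (π/4 + 2*π) :=
        Real.exp_lt_exp.mpr (by nlinarith [Real.pi_pos])
      intro h; nlinarith
    · have h1 : ((π/4 + 2*π : ℝ) : ℂ) * Complex.I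
          = ((π/4 : ℝ):ℂ) * Complex.I + ((1:ℤ):ℂ) * (2 * (π:ℝ) * Complex.I) := by
        push_cast; ring
      rw [h1, Complex.exp_add, Complex.exp_int_mul_two_pi_mul_I, mul_one]
      ring
    · have h1 : 2 * (π/4 + 2*π) = π/2 + (2:ℤ) * (2*π) := by push_cast; ring
      have h2 : 2 * (π/4) = π/2 := by ring
      rw [h1, h2, Real.sin_add_int_mul_two_pi, Real.sin_pi_div_two]
      ring
  -- main case: set up the basic quantities and immediately forget their definitions
  obtain ⟨ρ, α, hρ, hαlo, hαhi, hzp⟩ :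
      ∃ ρ α : ℝ, 0 < ρ ∧ -π < α ∧ α ≤ π ∧
        ((ρ:ℝ):ℂ) * Complex.exp (((α:ℝ):ℂ) * Complex.I) = z :=
    ⟨‖z‖, Complex.arg z, norm_pos_iff.mpr hz, Complex.neg_pi_lt_arg z,
      Complex.arg_le_pi z, Complex.norm_mul_exp_arg_mul_I z⟩
  have hπ : (1:ℝ) < π := by linarith [Real.pi_gt_three]
  obtain ⟨φ₀, ε, hε1, hφ₀lo, hφ₀hi, hsinkey⟩ :
      ∃ φ₀ ε : ℝ, (ε = 1 ∨ ε = -1) ∧ 3*π/4 ≤ φ₀ ∧ φ₀ < 5*π/4 ∧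
        ∀ x : ℝ, Real.sin (2*α + 2*φ₀ + x) = ε * Real.sin x := by
    set l : ℤ := ⌈(3*π/4 + α)/(π/2)⌉ with hldef
    refine ⟨-α + l*(π/2), (-1:ℝ)^l, ?_, ?_, ?_, ?_⟩
    · rcases Int.even_or_odd l with h | h
      · exact Or.inl h.neg_one_zpow
      · exact Or.inr h.neg_one_zpow
    · have h1 : (3*π/4 + α)/(π/2) ≤ (l:ℝ) := Int.le_ceil _
      rw [div_le_iff₀ (by positivity)] at h1
      linarith
    · have h1 : (l:ℝ) < (3*π/4 + α)/(π/2) + 1 := Int.ceil_lt_add_one _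
      have hp : (0:ℝ) < π/2 := by positivity
      have h3 := mul_lt_mul_of_pos_right h1 hp
      rw [add_mul, div_mul_cancel₀ _ (ne_of_gt hp), one_mul] at h3
      linarith
    · intro x
      have h1 : 2*α + 2*(-α + l*(π/2)) + x = x + (l:ℝ)*π := by push_cast; ring
      rw [h1, Real.sin_add_int_mul_pi]
  have hεabs : |ε| = 1 := by rcases hε1 with h | h <;> rw [h] <;> norm_num
  have hεsq : ε * ε = 1 := by rcases hε1 with h | h <;> rw [h] <;> norm_num
  have hεne : ε ≠ 0 := by rcases hε1 with h | h <;> rw [h] <;> norm_num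
  obtain ⟨N, hN⟩ := exists_nat_gt (2*Real.exp (4*π) + 4/ρ)
  have hNpos : (0:ℝ) < N := lt_of_le_of_lt (by positivity) hN
  set t1 : ℝ → ℝ := fun φ => α + φ + 2*π*((N:ℝ)+1) with ht1def
  set t2 : ℝ → ℝ := fun φ => α + π - φ + 2*π with ht2def
  set G : ℝ → ℝ := fun φ =>
    Real.exp (t1 φ) * Real.sin (2 * t1 φ) - Real.exp (t2 φ) * Real.sin (2 * t2 φ)
      - 2 * Real.cos φ / ρ with hGdef
  -- the sine identity
  have hsin1 : ∀ δ : ℝ, Real.sin (2 * t1 (φ₀ + δ)) = ε * Real.sin (2*δ) := by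
    intro δ
    have h1 : 2 * t1 (φ₀ + δ) = (2*α + 2*φ₀ + 2*δ) + ((2*(N:ℤ)+2 : ℤ):ℝ)*(2*π) := by
      simp only [ht1def]; push_cast; ring
    rw [h1, Real.sin_add_int_mul_two_pi, hsinkey]
  -- bound on the non-dominant part
  have hbound : ∀ φ : ℝ, φ₀ - π/8 ≤ φ →
      |Real.exp (t2 φ) * Real.sin (2 * t2 φ) + 2 * Real.cos φ / ρ|
        ≤ Real.exp (4*π) + 2/ρ := by
    intro φ hφ
    have h1 : |Real.exp (t2 φ) * Real.sin (2 * t2 φ)| ≤ Real.exp (4*π) := by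
      rw [abs_mul, Real.abs_exp]
      have h2 : t2 φ ≤ 4*π := by
        simp only [ht2def]
        nlinarith
      calc Real.exp (t2 φ) * |Real.sin (2 * t2 φ)| ≤ Real.exp (t2 φ) * 1 :=
            mul_le_mul_of_nonneg_left (Real.abs_sin_le_one (2 * t2 φ)) (Real.exp_nonneg _)
        _ ≤ Real.exp (4*π) := by rw [mul_one]; exact Real.exp_le_exp.mpr h2
    have h3 : |2 * Real.cos φ / ρ| ≤ 2/ρ := by
      rw [abs_div, abs_of_pos hρ, abs_mul, abs_two]
      calc 2 * |Real.cos φ| / ρ ≤ 2 * 1 / ρ := by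
            gcongr
            exact Real.abs_cos_le_one φ
        _ = 2/ρ := by ring
    calc _ ≤ |Real.exp (t2 φ) * Real.sin (2 * t2 φ)| + |2 * Real.cos φ / ρ| := abs_add_le _ _
      _ ≤ _ := add_le_add h1 h3
  -- dominance of the first term at the endpoints
  have hsqrt2 : (1:ℝ) ≤ Real.sqrt 2 := by
    nlinarith [Real.sq_sqrt (show (0:ℝ) ≤ 2 by norm_num), Real.sqrt_nonneg 2]
  have hsin4half : (1:ℝ)/2 ≤ Real.sin (π/4) := by
    rw [Real.sin_pi_div_four]; linarith
  have hE : ∀ δ : ℝ, -(π/8) ≤ δ →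
      Real.exp (4*π) + 2/ρ < Real.exp (t1 (φ₀+δ)) * Real.sin (π/4) := by
    intro δ hδ'
    have h_t1_ge : 2*π*(N:ℝ) ≤ t1 (φ₀+δ) := by
      simp only [ht1def]
      nlinarith
    have hA : (2*π*(N:ℝ) + 1 : ℝ) ≤ Real.exp (t1 (φ₀+δ)) :=
      le_trans (Real.add_one_le_exp _) (Real.exp_le_exp.mpr h_t1_ge)
    have hApos : (0:ℝ) ≤ Real.exp (t1 (φ₀+δ)) := Real.exp_nonneg _
    have hmul : Real.exp (t1 (φ₀+δ)) * (1/2) ≤ Real.exp (t1 (φ₀+δ)) * Real.sin (π/4) :=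
      mul_le_mul_of_nonneg_left hsin4half hApos
    have hNge : (N:ℝ) ≤ 2*π*(N:ℝ) := by nlinarith
    have hN' : 2*Real.exp (4*π) + 2*(2/ρ) < (N:ℝ) := by
      have : (4:ℝ)/ρ = 2*(2/ρ) := by ring
      linarith [hN, this.symm.le, this.le]
    linarith
  -- algebraic form of G near φ₀
  have hGsplit : ∀ δ : ℝ, G (φ₀+δ) =
      Real.exp (t1 (φ₀+δ)) * (ε * Real.sin (2*δ))
        - (Real.exp (t2 (φ₀+δ)) * Real.sin (2 * t2 (φ₀+δ)) + 2 * Real.cos (φ₀+δ) / ρ) := by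
    intro δ
    simp only [hGdef, hsin1]
    ring
  have habs_rest : ∀ δ : ℝ, -(π/8) ≤ δ →
      |ε * (Real.exp (t2 (φ₀+δ)) * Real.sin (2 * t2 (φ₀+δ)) + 2 * Real.cos (φ₀+δ) / ρ)|
        ≤ Real.exp (4*π) + 2/ρ := by
    intro δ hδ
    rw [abs_mul, hεabs, one_mul]
    exact hbound (φ₀+δ) (by linarith)
  have hHi : 0 < ε * G (φ₀ + π/8) := by
    have h1 := hGsplit (π/8)
    have h2 : Real.sin (2*(π/8)) = Real.sin (π/4) := by
      rw [show (2*(π/8):ℝ) = π/4 by ring]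
    have h3 := habs_rest (π/8) (by linarith [Real.pi_pos])
    have h4 := hE (π/8) (by linarith [Real.pi_pos])
    have h5 := (abs_le.mp h3).2
    have key : ε * G (φ₀ + π/8)
        = Real.exp (t1 (φ₀ + π/8)) * Real.sin (π/4)
          - ε * (Real.exp (t2 (φ₀+π/8)) * Real.sin (2 * t2 (φ₀+π/8))
              + 2 * Real.cos (φ₀+π/8) / ρ) := by
      rw [h1, h2]
      linear_combination (Real.exp (t1 (φ₀ + π/8)) * Real.sin (π/4)
        - Real.sin (π/4) * Real.exp (t1 (φ₀ + π/8))) * hεsq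
        + Real.exp (t1 (φ₀ + π/8)) * Real.sin (π/4) * hεsq
    rw [key]
    linarith
  have hLo : ε * G (φ₀ - π/8) < 0 := by
    have h1 := hGsplit (-(π/8))
    have h2 : Real.sin (2*(-(π/8))) = -Real.sin (π/4) := by
      rw [show (2*(-(π/8)):ℝ) = -(π/4) by ring, Real.sin_neg]
    have h3 := habs_rest (-(π/8)) (le_refl _)
    have h4 := hE (-(π/8)) (le_refl _)
    have h5 := (abs_le.mp h3).1
    have key : ε * G (φ₀ + (-(π/8)))
        = -(Real.exp (t1 (φ₀ + (-(π/8)))) * Real.sin (π/4))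
          - ε * (Real.exp (t2 (φ₀+(-(π/8)))) * Real.sin (2 * t2 (φ₀+(-(π/8))))
              + 2 * Real.cos (φ₀+(-(π/8))) / ρ) := by
      rw [h1, h2]
      linear_combination (-(Real.exp (t1 (φ₀ + (-(π/8)))) * Real.sin (π/4))) * hεsq
    rw [show φ₀ - π/8 = φ₀ + (-(π/8)) by ring, key]
    linarith
  -- IVT
  have hcontG : Continuous G := by
    simp only [hGdef, ht1def, ht2def]
    fun_prop
  have hle : φ₀ - π/8 ≤ φ₀ + π/8 := by linarith [Real.pi_pos]
  obtain ⟨φs, hφsmem, hφs0⟩ :=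
    intermediate_value_Icc hle ((continuous_const.mul hcontG).continuousOn)
      (Set.mem_Icc.mpr ⟨hLo.le, hHi.le⟩)
  have hGφs : G φs = 0 := by
    rcases mul_eq_zero.mp hφs0 with h | h
    · exact absurd h hεne
    · exact h
  have hφs_lo : 5*π/8 ≤ φs := by have := hφsmem.1; linarith
  have hφs_hi : φs ≤ 11*π/8 := by have := hφsmem.2; linarith
  have hcos : Real.cos φs < 0 :=
    Real.cos_neg_of_pi_div_two_lt_of_lt (by linarith) (by linarith)
  refine ⟨2 * Real.cos φs / ρ, t1 φs, t2 φs, ?_, ?_, ?_, ?_, ?_⟩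
  · exact ne_of_lt (div_neg_of_neg_of_pos (by linarith) hρ)
  · simp only [ht1def]; nlinarith
  · simp only [ht2def]; nlinarith
  · -- complex exponential identity
    have he1 : Complex.exp (((t1 φs : ℝ):ℂ) * Complex.I)
        = Complex.exp (((α + φs : ℝ):ℂ) * Complex.I) := by
      have h1 : ((t1 φs : ℝ):ℂ) * Complex.I
          = ((α + φs : ℝ):ℂ) * Complex.I + (((N:ℤ)+1:ℤ):ℂ) * (2 * (π:ℝ) * Complex.I) := by
        simp only [ht1def]; push_cast; ring
      rw [h1, Complex.exp_add, Complex.exp_int_mul_two_pi_mul_I, mul_one]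
    have he2 : Complex.exp (((t2 φs : ℝ):ℂ) * Complex.I)
        = Complex.exp (((α + π - φs : ℝ):ℂ) * Complex.I) := by
      have h1 : ((t2 φs : ℝ):ℂ) * Complex.I
          = ((α + π - φs : ℝ):ℂ) * Complex.I + ((1:ℤ):ℂ) * (2 * (π:ℝ) * Complex.I) := by
        simp only [ht2def]; push_cast; ring
      rw [h1, Complex.exp_add, Complex.exp_int_mul_two_pi_mul_I, mul_one]
    rw [he1, he2, ← hzp]
    exact exp_diff_eq α φs ρ (ne_of_gt hρ)
  · -- the real equation, from G φs = 0
    simp only [hGdef] at hGφs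
    linear_combination hGφs

end RDiff

lemma sum_pair (g : ℕ → ℝ) (n : ℕ) :
    ∑ i ∈ Finset.range n, (g (2*i) + g (2*i+1)) = ∑ j ∈ Finset.range (2*n), g j := by
  induction n with
  | zero => simp
  | succ n ih =>
    rw [Finset.sum_range_succ, ih, show 2*(n+1) = 2*n+1+1 from by ring,
      Finset.sum_range_succ, Finset.sum_range_succ]
    ring

lemma re_pair (x y p q : ℝ) :
    (((x:ℂ) + (y:ℂ) * Complex.I) * (starRingEnd ℂ) ((p:ℂ) + (q:ℂ) * Complex.I)).re
      = x * p + y * q := by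
  simp [Complex.mul_re, Complex.add_re, Complex.add_im]

/-- Scalar-input version: for `ℛ_r = 𝒮^{r−1} × ℛ ⊆ ℝ^{2r+1}` and `ψ(u) = (1, u, …, u^{2r})`,
every finite set `Ũ₀ ⊆ ℝ` of at most `2r` scalar inputs fails to distinguish: there are
`a, b ∈ ℛ_r` and `u* ∈ ℝ` with `⟨a − b, ψ(u*)⟩ ≠ 0` while `⟨a − b, ψ(u)⟩ = 0` for all
`u ∈ Ũ₀`. Hence the scalar-input response `β̃(x,u) = f(x)·ψ(u)` with image `ℛ_r` has no
universal distinguishing set of cardinality `2r`. -/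
theorem scalar_input_no_universal_distinguishing_set_of_card_two_r
    (r : ℕ) (hr : 0 < r)
    (S : Set ℂ)
    (hS : S = {ζ : ℂ | ∃ t : ℝ, 0 ≤ t ∧ ζ = (t : ℂ) * Complex.exp ((t : ℂ) * Complex.I)})
    (R : Set (ℂ × ℝ))
    (hR : R = {p : ℂ × ℝ | ∃ t : ℝ, 0 ≤ t ∧
      p = (Complex.exp ((t : ℂ) * Complex.I), Real.exp t * Real.sin (2 * t))})
    (Rr : Set ((Fin (r - 1) → ℂ) × ℂ × ℝ))
    (hRr : Rr = {p | (∀ i, p.1 i ∈ S) ∧ p.2 ∈ R}) :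
    ∀ U₀ : Finset ℝ, U₀.card ≤ 2 * r →
      ∃ a ∈ Rr, ∃ b ∈ Rr,
        (∃ ustar : ℝ, euclidDot (a - b) (psiCurve r ustar) ≠ 0) ∧
        ∀ u ∈ U₀, euclidDot (a - b) (psiCurve r u) = 0 := by
  obtain ⟨r', rfl⟩ : ∃ r', r = r' + 1 := ⟨r - 1, (Nat.succ_pred_eq_of_pos hr).symm⟩
  intro U₀ hcard
  classical
  -- the polynomial with roots U₀ (padded to degree exactly 2r'+2)
  set P : Polynomial ℝ :=
    (∏ u₀ ∈ U₀, (Polynomial.X - Polynomial.C u₀)) * Polynomial.X ^ (2*(r'+1) - U₀.card)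
    with hPdef
  have hmonicprod : (∏ u₀ ∈ U₀, (Polynomial.X - Polynomial.C u₀)).Monic :=
    Polynomial.monic_prod_of_monic _ _ fun u _ => Polynomial.monic_X_sub_C u
  have hmono : P.Monic := hmonicprod.mul (Polynomial.monic_X_pow _)
  have hdeg : P.natDegree = 2*r'+2 := by
    rw [hPdef, hmonicprod.natDegree_mul (Polynomial.monic_X_pow _),
      Polynomial.natDegree_prod_of_monic _ _ (fun u _ => Polynomial.monic_X_sub_C u)]
    simp only [Polynomial.natDegree_X_sub_C, Polynomial.natDegree_X_pow, Finset.sum_const,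
      smul_eq_mul, mul_one]
    omega
  set c : ℕ → ℝ := fun j => P.coeff j with hcdef
  have htop : c (2*r'+2) = 1 := by
    have h := hmono.coeff_natDegree
    rw [hdeg] at h
    exact h
  have heval : ∀ u : ℝ, P.eval u = ∑ j ∈ Finset.range (2*r'+3), c j * u^j := fun u =>
    Polynomial.eval_eq_sum_range' (by omega) u
  have hvan : ∀ u ∈ U₀, P.eval u = 0 := by
    intro u hu
    rw [hPdef, Polynomial.eval_mul, Polynomial.eval_prod,
      Finset.prod_eq_zero hu (by simp), zero_mul]
  have hne : ∃ us : ℝ, P.eval us ≠ 0 := by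
    obtain ⟨M, hM⟩ : ∃ M : ℝ, ∀ u ∈ U₀, u ≤ M :=
      ⟨(insert (0:ℝ) U₀).max' (Finset.insert_nonempty 0 U₀),
        fun u hu => Finset.le_max' _ u (Finset.mem_insert_of_mem hu)⟩
    refine ⟨max M 0 + 1, ne_of_gt ?_⟩
    rw [hPdef, Polynomial.eval_mul, Polynomial.eval_pow, Polynomial.eval_X,
      Polynomial.eval_prod]
    apply mul_pos
    · apply Finset.prod_pos
      intro u hu
      simp only [Polynomial.eval_sub, Polynomial.eval_X, Polynomial.eval_C]
      have h1 := hM u hu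
      have h2 := le_max_left M 0
      linarith
    · apply pow_pos
      have := le_max_right M 0
      linarith
  -- apply the two geometric lemmas
  obtain ⟨lam, t₁, t₂, hlam, ht₁, ht₂, hBC, hBR⟩ :=
    R_diff ((c (2*r') : ℂ) + (c (2*r'+1) : ℂ) * Complex.I)
  choose s s' hs using fun i : Fin r' =>
    spiral_diff (((lam * c (2*(i:ℕ)) : ℝ) : ℂ) + ((lam * c (2*(i:ℕ)+1) : ℝ) : ℂ) * Complex.I)
  set A : (Fin ((r'+1) - 1) → ℂ) × ℂ × ℝ :=
    (fun i => (s i : ℂ) * Complex.exp ((s i : ℂ) * Complex.I),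
      (Complex.exp ((t₁:ℂ) * Complex.I), Real.exp t₁ * Real.sin (2*t₁))) with hA
  set B : (Fin ((r'+1) - 1) → ℂ) × ℂ × ℝ :=
    (fun i => ((s' i : ℝ) : ℂ) * Complex.exp (((s' i : ℝ) : ℂ) * Complex.I),
      (Complex.exp ((t₂:ℂ) * Complex.I), Real.exp t₂ * Real.sin (2*t₂))) with hB
  have hdot : ∀ u : ℝ, euclidDot (A - B) (psiCurve (r'+1) u) = lam * P.eval u := by
    intro u
    have hsub1 : ∀ i : Fin r', (A - B).1 i
        = ((lam * c (2*(i:ℕ)) : ℝ) : ℂ) + ((lam * c (2*(i:ℕ)+1) : ℝ) : ℂ) * Complex.I := by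
      intro i
      simp only [hA, hB, Prod.fst_sub, Pi.sub_apply]
      exact (hs i).2.2
    have hsub2 : (A - B).2.1
        = ((lam * c (2*r') : ℝ) : ℂ) + ((lam * c (2*r'+1) : ℝ) : ℂ) * Complex.I := by
      simp only [hA, hB, Prod.snd_sub, Prod.fst_sub]
      rw [hBC]
      push_cast
      ring
    have hsub3 : (A - B).2.2 = lam := by
      simp only [hA, hB, Prod.snd_sub]
      exact hBR
    have he1 : 2*(r'+1) - 2 = 2*r' := by omega
    have he2 : 2*(r'+1) - 1 = 2*r'+1 := by omega
    have he3 : 2*(r'+1) = 2*r'+2 := by omega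
    have he4 : 2*r'+2-1 = 2*r'+1 := by omega
    have he5 : 2*r'+2-2 = 2*r' := by omega
    simp only [euclidDot, psiCurve, he1, he2, he3, he4, he5, Nat.add_sub_cancel]
    rw [hsub2, hsub3, re_pair]
    have hterm : ∀ i : Fin ((r'+1)-1),
        (((A - B).1 i) * (starRingEnd ℂ)
          ((↑(u ^ (2 * (i:ℕ))) : ℂ) + (↑(u ^ (2 * (i:ℕ) + 1)) : ℂ) * Complex.I)).re
        = lam * c (2*(i:ℕ)) * u^(2*(i:ℕ)) + lam * c (2*(i:ℕ)+1) * u^(2*(i:ℕ)+1) := by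
      intro i
      rw [hsub1 i, re_pair]
    rw [Finset.sum_congr rfl (fun i _ => hterm i)]
    rw [Fin.sum_univ_eq_sum_range
      (fun i => lam * c (2*i) * u^(2*i) + lam * c (2*i+1) * u^(2*i+1)) (r'+1-1)]
    simp only [Nat.add_sub_cancel]
    have hps : ∑ i ∈ Finset.range r', (lam * c (2*i) * u^(2*i) + lam * c (2*i+1) * u^(2*i+1))
        = ∑ j ∈ Finset.range (2*r'), lam * (c j * u^j) := by
      rw [← sum_pair (fun j => lam * (c j * u^j)) r']
      apply Finset.sum_congr rfl
      intro i _
      ring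
    rw [hps, heval, Finset.mul_sum,
      show 2*r'+3 = (2*r'+2)+1 from rfl, Finset.sum_range_succ,
      show 2*r'+2 = (2*r'+1)+1 from rfl, Finset.sum_range_succ,
      show 2*r'+1 = (2*r')+1 from rfl, Finset.sum_range_succ, htop]
    ring
  refine ⟨A, ?_, B, ?_, ?_, ?_⟩
  · rw [hRr]
    refine ⟨fun i => ?_, ?_⟩
    · rw [hS]; exact ⟨s i, (hs i).1, rfl⟩
    · rw [hR]; exact ⟨t₁, ht₁, rfl⟩
  · rw [hRr]
    refine ⟨fun i => ?_, ?_⟩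
    · rw [hS]; exact ⟨s' i, (hs i).2.1, rfl⟩
    · rw [hR]; exact ⟨t₂, ht₂, rfl⟩
  · obtain ⟨us, hus⟩ := hne
    exact ⟨us, by rw [hdot us]; exact mul_ne_zero hlam hus⟩
  · intro u hu
    rw [hdot u, hvan u hu, mul_zero]
end
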